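/- arXiv:math/9801146 — 5 statements merged into one kernel-verified Lean document; each statement's English description precedes it below -/
import Mathlib

section
/- Let μ be a finite signed measure on ℝ. If Σ(μ) ≥ n for some n ≥ 1, then there exist real numbers a₁ ≤ b₁ < a₂ ≤ b₂ < ⋯ < a_{n+1} ≤ b_{n+1} such that the measures μ⁺ and μ⁻ alternately assign positive mass to the intervals [a_i, b_i]; i.e., either μ⁺([a₁,b₁]) > 0, μ⁻([a₂,b₂]) > 0, μ⁺([a₃,b₃]) > 0, … , or the same with the roles of μ⁺ and μ⁻ exchanged. -/
/-!
The set of strictly increasing `(m + 1)`-tuples is open, and an open set of positive measure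
meets the support of the measure, so it contains a small closed box of positive measure. For an
alternating product measure such a box is a product of intervals charged alternately by `μ⁺`
and `μ⁻`, and the box lying inside the set of increasing tuples forces consecutive intervals to
be strictly separated. Since `Σ(μ) ≥ n ≥ 1`, some `m ≥ n` has positive alternating measure of
increasing `(m + 1)`-tuples; keep the first `n + 1` intervals.
-/

open MeasureTheory ENNReal

noncomputable def altMeasure (p q : MeasureTheory.Measure ℝ) (n : ℕ) :
    MeasureTheory.Measure (Fin n → ℝ) :=
  MeasureTheory.Measure.pi (fun i => if Even (i : ℕ) then p else q)

def orderedSet (n : ℕ) : Set (Fin n → ℝ) := {x | StrictMono x}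

noncomputable def sigmaPair (p q : MeasureTheory.Measure ℝ) : ℕ∞ :=
  ⨆ (n : ℕ) (_ : 0 < altMeasure p q (n+1) (orderedSet (n+1)) ∨
      0 < altMeasure q p (n+1) (orderedSet (n+1))), (n : ℕ∞)

/-- Number of zero-crossings of a finite signed measure. -/
noncomputable def sigmaCross (μ : MeasureTheory.SignedMeasure ℝ) : ℕ∞ :=
  sigmaPair μ.toJordanDecomposition.posPart μ.toJordanDecomposition.negPart

open Set

lemma isOpen_orderedSet (n : ℕ) : IsOpen (orderedSet n) := by
  simp only [orderedSet, StrictMono, ofPred_forall]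
  exact isOpen_iInter_of_finite fun i => isOpen_iInter_of_finite fun j =>
    isOpen_iInter_of_finite fun _ => isOpen_lt (continuous_apply i) (continuous_apply j)

lemma exists_Icc_subset_measure_pos {ι : Type*} [Fintype ι] (μ : Measure (ι → ℝ))
    {U : Set (ι → ℝ)} (hU : IsOpen U) (hμ : 0 < μ U) :
    ∃ a b : ι → ℝ, Icc a b ⊆ U ∧ 0 < μ (Icc a b) := by
  obtain ⟨x, hxU, hx⟩ := μ.nonempty_inter_support_of_pos hμ
  obtain ⟨ε, hε, hball⟩ := Metric.nhds_basis_closedBall.mem_iff.1 (hU.mem_nhds hxU)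
  have hIcc : Metric.closedBall x ε = Icc (x - fun _ => ε) (x + fun _ => ε) := by
    simp only [closedBall_pi x hε.le, Real.closedBall_eq_Icc, pi_univ_Icc]
    rfl
  refine ⟨_, _, hIcc ▸ hball, ?_⟩
  rw [← hIcc]
  exact (Measure.mem_support_iff_forall x).1 hx _ (Metric.closedBall_mem_nhds x hε)

lemma MeasureTheory.Measure.pi_Icc_pos_iff {ι : Type*} [Fintype ι] (ν : ι → Measure ℝ)
    [∀ i, SigmaFinite (ν i)] (a b : ι → ℝ) :
    0 < Measure.pi ν (Icc a b) ↔ ∀ i, 0 < ν i (Icc (a i) (b i)) := by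
  simp only [← pi_univ_Icc, Measure.pi_pi, pos_iff_ne_zero, ne_eq, Finset.prod_eq_zero_iff,
    Finset.mem_univ, true_and, not_exists]

lemma lt_of_Icc_subset_setOf_lt {ι α : Type*} [DecidableEq ι] [Preorder α] {a b : ι → α}
    (hab : a ≤ b) {i j : ι} (hij : i ≠ j) (h : Icc a b ⊆ {x | x i < x j}) : b i < a j := by
  have hmem : Function.update a i (b i) ∈ Icc a b := by
    constructor <;> intro k <;> rcases eq_or_ne k i with rfl | hk <;> simp [*, hab k]
  simpa [Function.update_of_ne hij.symm] using h hmem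

def AlternatingIntervals (p q : Measure ℝ) {n : ℕ} (a b : Fin (n + 1) → ℝ) : Prop :=
  (∀ i, a i ≤ b i) ∧ (∀ i : Fin n, b i.castSucc < a i.succ) ∧
    ∀ i : Fin (n + 1), 0 < (if Even (i : ℕ) then p else q) (Icc (a i) (b i))

lemma AlternatingIntervals.castLE {p q : Measure ℝ} {m n : ℕ} {a b : Fin (m + 1) → ℝ}
    (h : AlternatingIntervals p q a b) (hnm : n ≤ m) :
    AlternatingIntervals p q (a ∘ Fin.castLE (Nat.succ_le_succ hnm))
      (b ∘ Fin.castLE (Nat.succ_le_succ hnm)) := by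
  obtain ⟨hab, hsep, hpos⟩ := h
  refine ⟨fun i => hab _, fun i => ?_, fun i => hpos (Fin.castLE _ i)⟩
  simpa using hsep (Fin.castLE hnm i)

lemma exists_alternatingIntervals_of_altMeasure_pos (p q : Measure ℝ) [SigmaFinite p]
    [SigmaFinite q] {m : ℕ} (h : 0 < altMeasure p q (m + 1) (orderedSet (m + 1))) :
    ∃ a b : Fin (m + 1) → ℝ, AlternatingIntervals p q a b := by
  obtain ⟨a, b, hsub, hpos⟩ := exists_Icc_subset_measure_pos _ (isOpen_orderedSet _) h
  have hfac : ∀ i : Fin (m + 1), 0 < (if Even (i : ℕ) then p else q) (Icc (a i) (b i)) := by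
    have : ∀ i : Fin (m + 1), SigmaFinite (if Even (i : ℕ) then p else q) := fun i => by
      split <;> infer_instance
    exact (Measure.pi_Icc_pos_iff _ a b).1 hpos
  have hab : a ≤ b := fun i => nonempty_Icc.1 (nonempty_of_measure_ne_zero (hfac i).ne')
  refine ⟨a, b, hab, fun i => lt_of_Icc_subset_setOf_lt hab Fin.castSucc_lt_succ.ne ?_, hfac⟩
  exact fun x hx => hsub hx Fin.castSucc_lt_succ

lemma exists_altMeasure_pos_of_le_sigmaPair {p q : Measure ℝ} {n : ℕ} (hn : 1 ≤ n)
    (h : (n : ℕ∞) ≤ sigmaPair p q) :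
    ∃ m, n ≤ m ∧ (0 < altMeasure p q (m + 1) (orderedSet (m + 1)) ∨
      0 < altMeasure q p (m + 1) (orderedSet (m + 1))) := by
  obtain ⟨k, rfl⟩ := Nat.exists_eq_add_of_le' hn
  have hk : (k : ℕ∞) < sigmaPair p q := lt_of_lt_of_le (by exact_mod_cast k.lt_succ_self) h
  obtain ⟨m, hm⟩ := lt_iSup_iff.1 hk
  obtain ⟨hpos, hkm⟩ := lt_iSup_iff.1 hm
  exact ⟨m, by exact_mod_cast hkm, hpos⟩

/-- If `Σ(μ) ≥ n ≥ 1` then there are ordered closed intervals `[a i, b i]`, `i = 0, …, n`,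
to which `μ⁺` and `μ⁻` alternately assign positive mass (starting with either `μ⁺` or `μ⁻`). -/
theorem stmt2 (μ : MeasureTheory.SignedMeasure ℝ) (n : ℕ) (hn : 1 ≤ n)
    (hSig : (n : ℕ∞) ≤ sigmaCross μ) :
    ∃ a b : Fin (n + 1) → ℝ,
      (∀ i, a i ≤ b i) ∧
      (∀ i : Fin n, b i.castSucc < a i.succ) ∧
      ((∀ i : Fin (n + 1),
          0 < (if Even (i : ℕ) then μ.toJordanDecomposition.posPart
               else μ.toJordanDecomposition.negPart) (Set.Icc (a i) (b i))) ∨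
       (∀ i : Fin (n + 1),
          0 < (if Even (i : ℕ) then μ.toJordanDecomposition.negPart
               else μ.toJordanDecomposition.posPart) (Set.Icc (a i) (b i)))) := by
  obtain ⟨m, hnm, hpos | hpos⟩ := exists_altMeasure_pos_of_le_sigmaPair hn hSig
  · obtain ⟨a, b, h⟩ := exists_alternatingIntervals_of_altMeasure_pos _ _ hpos
    obtain ⟨hab, hsep, hpos⟩ := h.castLE hnm
    exact ⟨_, _, hab, hsep, Or.inl hpos⟩
  · obtain ⟨a, b, h⟩ := exists_alternatingIntervals_of_altMeasure_pos _ _ hpos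
    obtain ⟨hab, hsep, hpos⟩ := h.castLE hnm
    exact ⟨_, _, hab, hsep, Or.inr hpos⟩
end

section
/- Let b be a sign sequence and let a be obtained from b by replacing a substring (a block of consecutive entries) of b that contains both a +1 and a −1 by either the empty substring or by a constant substring (all entries equal). Then σ(a) ≤ σ(b). -/
/-
Replacing the mixed block `m` of `b = p ++ m ++ s` by a constant block `m'` (or by nothing)
cannot create new alternating subsequences: an alternating subsequence of `p ++ m' ++ s` picks
at most one entry from the constant block, and that entry (a sign) also occurs in `m`, which
contains both signs. So every alternating subsequence of `a` is one of `b`, and `σ` can only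
drop.
-/

/-- The number of sign changes `σ` of a sign sequence: the largest `k` such that there is a
(not necessarily consecutive) subsequence of length `k + 1` with all consecutive entries
distinct (`max ∅ = 0`), with `σ(∅) = -1`. -/
noncomputable def sigmaSeq (l : List ℤ) : ℤ :=
  if l = [] then -1
  else ((sSup {k : ℕ | ∃ s : List ℤ, s.Sublist l ∧ s.length = k + 1 ∧ s.Chain' (· ≠ ·)} : ℕ) : ℤ)

namespace List

variable {α : Type*}

theorem IsChain.length_le_one_of_forall_eq {t : List α} {c : α} (ht : t.IsChain (· ≠ ·))
    (hc : ∀ x ∈ t, x = c) : t.length ≤ 1 := by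
  match t, ht, hc with
  | [], _, _ | [_], _, _ => simp
  | x :: y :: _, ht, hc =>
    exact absurd ((hc x (by simp)).trans (hc y (by simp)).symm) (isChain_cons_cons.mp ht).1

theorem sublist_of_length_le_one_of_subset {t l : List α} (ht : t.length ≤ 1) (hsub : t ⊆ l) :
    t <+ l := by
  match t, ht with
  | [], _ => exact nil_sublist l
  | [x], _ => exact singleton_sublist.mpr (hsub (mem_singleton_self x))

theorem IsChain.sublist_append_of_sublist_append_const {t p m m' s : List α} {c : α}
    (ht : t.IsChain (· ≠ ·)) (hc : ∀ x ∈ m', x = c) (hm : m' ⊆ m)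
    (hts : t <+ p ++ m' ++ s) : t <+ p ++ m ++ s := by
  rw [append_assoc] at hts ⊢
  obtain ⟨t₁, t₂₃, rfl, ht₁, ht₂₃⟩ := sublist_append_iff.mp hts
  obtain ⟨t₂, t₃, rfl, ht₂, ht₃⟩ := sublist_append_iff.mp ht₂₃
  have hchain₂ : t₂.IsChain (· ≠ ·) := ht.infix ⟨t₁, t₃, by simp⟩
  have hlen₂ : t₂.length ≤ 1 :=
    hchain₂.length_le_one_of_forall_eq fun x hx => hc x (ht₂.subset hx)
  have ht₂m : t₂ <+ m :=
    sublist_of_length_le_one_of_subset hlen₂ fun x hx => hm (ht₂.subset hx)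
  exact ht₁.append (ht₂m.append ht₃)

end List

theorem sigmaSeq_le_of_forall_chain_sublist {a b : List ℤ} (hb : b ≠ [])
    (h : ∀ t : List ℤ, t.IsChain (· ≠ ·) → t.Sublist a → t.Sublist b) :
    sigmaSeq a ≤ sigmaSeq b := by
  unfold sigmaSeq
  rw [if_neg hb]
  split_ifs with ha
  · omega
  · have hsub :
        {k : ℕ | ∃ t : List ℤ, t.Sublist a ∧ t.length = k + 1 ∧ t.IsChain (· ≠ ·)} ⊆
        {k : ℕ | ∃ t : List ℤ, t.Sublist b ∧ t.length = k + 1 ∧ t.IsChain (· ≠ ·)} :=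
      fun k ⟨t, hta, hlen, hchain⟩ => ⟨t, h t hchain hta, hlen, hchain⟩
    have hbdd : BddAbove {k : ℕ | ∃ t : List ℤ, t.Sublist b ∧ t.length = k + 1 ∧
        t.IsChain (· ≠ ·)} :=
      ⟨b.length, fun k ⟨t, htb, hlen, _⟩ => by have := htb.length_le; omega⟩
    have hne : {k : ℕ | ∃ t : List ℤ, t.Sublist a ∧ t.length = k + 1 ∧
        t.IsChain (· ≠ ·)}.Nonempty :=
      ⟨0, [a.head ha], List.singleton_sublist.mpr (List.head_mem ha), rfl,
        List.isChain_singleton _⟩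
    exact_mod_cast csSup_le_csSup hbdd hne hsub

theorem stmt5_general (a b p m s : List ℤ)
    (hbsplit : b = p ++ m ++ s) (hm1 : (1 : ℤ) ∈ m) (hm2 : (-1 : ℤ) ∈ m)
    (ha : a = p ++ s ∨
      ∃ m' : List ℤ, (∀ x ∈ m', x = 1 ∨ x = -1) ∧ (∃ c : ℤ, ∀ x ∈ m', x = c) ∧
        a = p ++ m' ++ s) :
    sigmaSeq a ≤ sigmaSeq b := by
  subst hbsplit
  have hb : p ++ m ++ s ≠ [] := by simp [List.ne_nil_of_mem hm1]
  refine sigmaSeq_le_of_forall_chain_sublist hb fun t ht hta => ?_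
  rcases ha with rfl | ⟨m', hsigns, ⟨c, hc⟩, rfl⟩
  · exact hta.trans ((List.sublist_append_left p m).append (List.Sublist.refl s))
  · have hm : m' ⊆ m := fun x hx => by rcases hsigns x hx with rfl | rfl <;> assumption
    exact ht.sublist_append_of_sublist_append_const hc hm hta

/-- If `a` is obtained from the sign sequence `b = p ++ m ++ s` by replacing a substring `m`
of `b` containing both a `+1` and a `-1` by either the empty substring or a constant substring
`m'`, then `σ(a) ≤ σ(b)`. -/
theorem stmt5 (a b p m s : List ℤ) (hb : ∀ x ∈ b, x = 1 ∨ x = -1)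
    (hbsplit : b = p ++ m ++ s) (hm1 : (1 : ℤ) ∈ m) (hm2 : (-1 : ℤ) ∈ m)
    (ha : a = p ++ s ∨
      ∃ m' : List ℤ, (∀ x ∈ m', x = 1 ∨ x = -1) ∧ (∃ c : ℤ, ∀ x ∈ m', x = c) ∧
        a = p ++ m' ++ s) :
    sigmaSeq a ≤ sigmaSeq b :=
  stmt5_general a b p m s hbsplit hm1 hm2 ha
end

section
/- Let ν = Σ_{i=1}^n ε_i δ_{x_i} be a nonzero finite signed integer-valued measure on ℝ, where ε_i ∈ {+1,−1}, x₁ ≤ x₂ ≤ ⋯ ≤ x_n, and x_i < x_{i+1} whenever ε_i ≠ ε_{i+1}. Then the number of zero-crossings Σ(ν) equals σ((ε₁,…,ε_n)), the number of sign changes in the sequence (ε₁,…,ε_n). -/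
open MeasureTheory ENNReal

/-!
Write `ν = P₊ - P₋` with `P_s = ∑_{εᵢ = s} δ_{xᵢ}`. Points of opposite sign are separated by a
sign change, hence distinct, so the supports are disjoint and `(P₊, P₋)` is the Jordan
decomposition of `ν`. The alternating product of `P₊, P₋` charges the strictly increasing tuples
iff some strictly increasing choice of atoms carries the signs `+, -, +, …`. If `c k` is the number
of sign changes before position `k`, then `εₖ = ε₀ (-1)^(c k)` and `x` strictly increases wherever
`c` does; so a chain of `m + 1` atoms with alternating signs forces `c` to increase along it, and
conversely one atom from each block of constant sign gives a chain of length `σ(ε) + 1`.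
-/

def changeCount {α : Type*} [DecidableEq α] (e : ℕ → α) (k : ℕ) : ℕ :=
  ((Finset.range k).filter fun i => e i ≠ e (i + 1)).card

section ChangeCount

variable {α : Type*} [DecidableEq α] {e : ℕ → α}

theorem changeCount_zero : changeCount e 0 = 0 := rfl

theorem changeCount_succ (k : ℕ) :
    changeCount e (k + 1) = changeCount e k + if e k ≠ e (k + 1) then 1 else 0 := by
  simp only [changeCount, Finset.range_add_one, Finset.filter_insert]
  split_ifs <;> simp [Finset.card_insert_of_notMem]

theorem changeCount_mono : Monotone (changeCount e) := fun _ _ h =>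
  Finset.card_le_card (Finset.filter_subset_filter _ (Finset.range_subset_range.2 h))

theorem exists_ne_succ_of_changeCount_lt {a b : ℕ} (h : changeCount e a < changeCount e b) :
    ∃ k, a ≤ k ∧ k < b ∧ e k ≠ e (k + 1) := by
  obtain ⟨k, hkb, hka⟩ := Finset.exists_mem_notMem_of_card_lt_card h
  simp only [Finset.mem_filter, Finset.mem_range, not_and] at hkb hka
  exact ⟨k, not_lt.1 fun hk => hka hk hkb.2, hkb.1, hkb.2⟩

theorem exists_changeCount_eq {N t : ℕ} (ht : t ≤ changeCount e N) :
    ∃ k ≤ N, changeCount e k = t := by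
  induction N with
  | zero => exact ⟨0, le_rfl, (Nat.le_zero.1 ht).symm⟩
  | succ N ih =>
    rcases (changeCount_succ (e := e) N ▸ ht).lt_or_eq with ht | ht
    · obtain ⟨k, hk, hkt⟩ := ih (by split_ifs at ht <;> omega)
      exact ⟨k, hk.trans N.le_succ, hkt⟩
    · exact ⟨N + 1, le_rfl, by rw [changeCount_succ, ht]⟩

variable {β : Type*} [Preorder β] {X : ℕ → β}

theorem lt_of_changeCount_lt (hX : Monotone X) (hsep : ∀ k, e k ≠ e (k + 1) → X k < X (k + 1))
    {a b : ℕ} (h : changeCount e a < changeCount e b) : X a < X b := by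
  obtain ⟨k, hak, hkb, hk⟩ := exists_ne_succ_of_changeCount_lt h
  calc X a ≤ X k := hX hak
    _ < X (k + 1) := hsep k hk
    _ ≤ X b := hX hkb

end ChangeCount

def IsAlternatingChain {ι : Type*} (ε : ι → ℤ) (x : ι → ℝ) {m : ℕ} (j : Fin m → ι) : Prop :=
  StrictMono (x ∘ j) ∧ ∃ s : ℤ, ∀ i, ε (j i) = s * (-1) ^ (i : ℕ)

section SignSequence

variable {e : ℕ → ℤ} {X : ℕ → ℝ}

theorem eq_mul_neg_one_pow_changeCount (he : ∀ k, e k = 1 ∨ e k = -1) (k : ℕ) :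
    e k = e 0 * (-1) ^ changeCount e k := by
  induction k with
  | zero => simp [changeCount_zero]
  | succ k ih =>
    rw [changeCount_succ]
    split_ifs with h
    · rw [pow_succ, ← mul_assoc, ← ih]
      rcases he k with hk | hk <;> rcases he (k + 1) with hk' | hk' <;> omega
    · rw [add_zero, ← ih, not_not.1 h]

theorem ne_of_sign_ne (he : ∀ k, e k = 1 ∨ e k = -1) (hX : Monotone X)
    (hsep : ∀ k, e k ≠ e (k + 1) → X k < X (k + 1)) {a b : ℕ} (hab : e a ≠ e b) : X a ≠ X b := by
  have hc : changeCount e a ≠ changeCount e b := fun h => hab <| by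
    rw [eq_mul_neg_one_pow_changeCount he a, eq_mul_neg_one_pow_changeCount he b, h]
  rcases hc.lt_or_gt with h | h
  · exact (lt_of_changeCount_lt hX hsep h).ne
  · exact (lt_of_changeCount_lt hX hsep h).ne'

theorem IsAlternatingChain.le_changeCount (he : ∀ k, e k = 1 ∨ e k = -1) (hX : Monotone X)
    {m : ℕ} {j : Fin (m + 1) → ℕ} (hj : IsAlternatingChain e X j) {N : ℕ} (hjN : ∀ i, j i ≤ N) :
    m ≤ changeCount e N := by
  obtain ⟨hmono, s, hs⟩ := hj
  have hc : StrictMono (changeCount e ∘ j) := Fin.strictMono_iff_lt_succ.2 fun i => by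
    have hle : j i.castSucc ≤ j i.succ :=
      le_of_not_gt fun h => (hmono i.castSucc_lt_succ).not_ge (hX h.le)
    have hsucc : e (j i.succ) = -e (j i.castSucc) := by
      rw [hs, hs, Fin.val_succ, Fin.val_castSucc, pow_succ]; ring
    refine (changeCount_mono hle).lt_of_ne fun heq => ?_
    rw [eq_mul_neg_one_pow_changeCount he (j i.succ), ← heq,
      ← eq_mul_neg_one_pow_changeCount he] at hsucc
    rcases he (j i.castSucc) with h | h <;> rw [h] at hsucc <;> norm_num at hsucc
  simpa using Finset.card_le_card_of_injOn (s := Finset.univ) (changeCount e ∘ j)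
    (fun i _ => Finset.mem_range.2 (Nat.lt_succ_of_le (changeCount_mono (hjN i))))
    hc.injective.injOn

theorem exists_isAlternatingChain_of_le_changeCount (he : ∀ k, e k = 1 ∨ e k = -1)
    (hX : Monotone X) (hsep : ∀ k, e k ≠ e (k + 1) → X k < X (k + 1)) {m N : ℕ}
    (hm : m ≤ changeCount e N) : ∃ j : Fin (m + 1) → ℕ, IsAlternatingChain e X j := by
  choose j _ hj using fun i : Fin (m + 1) =>
    exists_changeCount_eq (e := e) (t := i) ((Nat.lt_succ_iff.1 i.2).trans hm)
  refine ⟨j, fun a b hab => lt_of_changeCount_lt hX hsep (by rwa [hj, hj]), e 0, fun i => ?_⟩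
  rw [eq_mul_neg_one_pow_changeCount he, hj]

end SignSequence

theorem Fin.clamp_eq_mk {k N : ℕ} (h : k < N + 1) : Fin.clamp k N = ⟨k, h⟩ :=
  Fin.ext (min_eq_left (Nat.lt_succ_iff.1 h))

theorem Fin.clamp_val_self {N : ℕ} (i : Fin (N + 1)) : Fin.clamp i N = i :=
  Fin.clamp_eq_mk i.2

-- Extending `ε` and `x` to `ℕ` through `Fin.clamp` preserves every hypothesis.
section Clamp

variable {N : ℕ} {ε : Fin (N + 1) → ℤ} {x : Fin (N + 1) → ℝ}

theorem lt_clamp_succ_of_ne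
    (hsep : ∀ i : Fin N, ε i.castSucc ≠ ε i.succ → x i.castSucc < x i.succ) (k : ℕ)
    (hk : ε (Fin.clamp k N) ≠ ε (Fin.clamp (k + 1) N)) :
    x (Fin.clamp k N) < x (Fin.clamp (k + 1) N) := by
  rcases lt_or_ge k N with h | h
  · rw [Fin.clamp_eq_mk (by omega), Fin.clamp_eq_mk (by omega)] at hk ⊢
    exact hsep ⟨k, h⟩ hk
  · rw [Fin.clamp_eq_last _ _ h, Fin.clamp_eq_last _ _ (h.trans k.le_succ)] at hk
    exact (hk rfl).elim

theorem card_filter_ne_succ_eq_changeCount :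
    (Finset.univ.filter fun i : Fin (N + 1) =>
      ∃ h : (i : ℕ) + 1 < N + 1, ε i ≠ ε ⟨(i : ℕ) + 1, h⟩).card =
      changeCount (fun k => ε (Fin.clamp k N)) N := by
  refine Finset.card_nbij (fun i => (i : ℕ)) (fun i hi => ?_) (fun a _ b _ h => Fin.ext h)
    fun k hk => ?_
  · obtain ⟨h, hne⟩ := (Finset.mem_filter.1 hi).2
    refine Finset.mem_filter.2 ⟨Finset.mem_range.2 (by dsimp only; omega), ?_⟩
    dsimp only
    rwa [Fin.clamp_val_self, Fin.clamp_eq_mk h]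
  · obtain ⟨hk, hne⟩ := Finset.mem_filter.1 hk
    rw [Finset.mem_range] at hk
    dsimp only at hne
    rw [Fin.clamp_eq_mk (by omega), Fin.clamp_eq_mk (by omega)] at hne
    exact ⟨⟨k, by omega⟩,
      Finset.mem_filter.2 ⟨Finset.mem_univ _, show k + 1 < N + 1 by omega, hne⟩, rfl⟩

theorem exists_isAlternatingChain_iff (hε : ∀ i, ε i = 1 ∨ ε i = -1) (hx : Monotone x)
    (hsep : ∀ i : Fin N, ε i.castSucc ≠ ε i.succ → x i.castSucc < x i.succ) (m : ℕ) :
    (∃ j : Fin (m + 1) → Fin (N + 1), IsAlternatingChain ε x j) ↔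
      m ≤ changeCount (fun k => ε (Fin.clamp k N)) N := by
  have he : ∀ k, ε (Fin.clamp k N) = 1 ∨ ε (Fin.clamp k N) = -1 := fun k => hε _
  have hX : Monotone fun k => x (Fin.clamp k N) := hx.comp Fin.clamp_monotone
  constructor
  · rintro ⟨j, hj⟩
    have hε' : (fun k => ε (Fin.clamp k N)) ∘ Fin.val = ε :=
      funext fun i => congrArg ε (Fin.clamp_val_self i)
    have hx' : (fun k => x (Fin.clamp k N)) ∘ Fin.val = x :=
      funext fun i => congrArg x (Fin.clamp_val_self i)
    rw [← hε', ← hx'] at hj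
    exact IsAlternatingChain.le_changeCount (j := Fin.val ∘ j) he hX hj
      fun i => Nat.lt_succ_iff.1 (j i).2
  · intro hm
    obtain ⟨j, hj⟩ := exists_isAlternatingChain_of_le_changeCount he hX
      (lt_clamp_succ_of_ne hsep) hm
    exact ⟨fun i => Fin.clamp (j i) N, hj⟩

theorem ne_of_sign_ne_of_sep (hε : ∀ i, ε i = 1 ∨ ε i = -1) (hx : Monotone x)
    (hsep : ∀ i : Fin N, ε i.castSucc ≠ ε i.succ → x i.castSucc < x i.succ) {a b : Fin (N + 1)}
    (hab : ε a ≠ ε b) : x a ≠ x b := by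
  have := ne_of_sign_ne (e := fun k => ε (Fin.clamp k N)) (X := fun k => x (Fin.clamp k N))
    (fun k => hε _) (hx.comp Fin.clamp_monotone) (lt_clamp_succ_of_ne hsep) (a := a) (b := b)
  simpa only [Fin.clamp_val_self] using this (by simpa only [Fin.clamp_val_self] using hab)

end Clamp

namespace MeasureTheory.Measure

variable {ι : Type*} [Fintype ι] {α : ι → Type*} [∀ i, MeasurableSpace (α i)]
  {μ : ∀ i, Measure (α i)} [∀ i, SigmaFinite (μ i)]

theorem pi_pos_of_mem_of_singleton_ne_zero {S : Set (∀ i, α i)} {y : ∀ i, α i} (hy : y ∈ S)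
    (h : ∀ i, μ i {y i} ≠ 0) : 0 < Measure.pi μ S :=
  calc 0 < ∏ i, μ i {y i} := CanonicallyOrderedAdd.prod_pos.2 fun i _ => pos_iff_ne_zero.2 (h i)
    _ = Measure.pi μ {y} := by rw [← Set.univ_pi_singleton, Measure.pi_pi]
    _ ≤ Measure.pi μ S := measure_mono (Set.singleton_subset_iff.2 hy)

theorem exists_mem_forall_mem_of_pi_pos {S : Set (∀ i, α i)} {A : ∀ i, Set (α i)}
    (hA : ∀ i, μ i (A i)ᶜ = 0) (h : 0 < Measure.pi μ S) : ∃ y ∈ S, ∀ i, y i ∈ A i :=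
  exists_mem_of_measure_ne_zero_of_ae h.ne' <| ae_restrict_of_ae <|
    Filter.eventually_all.2 fun i => tendsto_eval_ae_ae.eventually (mem_ae_iff.2 (hA i))

end MeasureTheory.Measure

noncomputable def diracPart {ι : Type*} [Fintype ι] (ε : ι → ℤ) (x : ι → ℝ) (s : ℤ) :
    Measure ℝ :=
  ∑ i ∈ Finset.univ.filter (fun i => ε i = s), Measure.dirac (x i)

section DiracPart

variable {ι : Type*} [Fintype ι] (ε : ι → ℤ) (x : ι → ℝ)

instance (s : ℤ) : IsFiniteMeasure (diracPart ε x s) := by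
  unfold diracPart; infer_instance

theorem diracPart_apply_eq_zero_iff {s : ℤ} {U : Set ℝ} (hU : MeasurableSet U) :
    diracPart ε x s U = 0 ↔ ∀ i, ε i = s → x i ∉ U := by
  simp [diracPart, Measure.finsetSum_apply, Measure.dirac_apply' _ hU, Finset.sum_eq_zero_iff]

theorem measurableSet_image_setOf_eq (s : ℤ) : MeasurableSet (x '' {i | ε i = s}) :=
  ((Set.toFinite _).image x).measurableSet

theorem diracPart_compl_image_eq_zero (s : ℤ) : diracPart ε x s (x '' {i | ε i = s})ᶜ = 0 :=
  (diracPart_apply_eq_zero_iff ε x (measurableSet_image_setOf_eq ε x s).compl).2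
    fun i hi hx => hx ⟨i, hi, rfl⟩

theorem diracPart_singleton_ne_zero {i : ι} : diracPart ε x (ε i) {x i} ≠ 0 := fun h =>
  (diracPart_apply_eq_zero_iff ε x (measurableSet_singleton _)).1 h i rfl rfl

theorem pi_diracPart_orderedSet_pos_iff {m : ℕ} (τ : Fin m → ℤ) :
    0 < Measure.pi (fun i => diracPart ε x (τ i)) (orderedSet m) ↔
      ∃ j : Fin m → ι, StrictMono (x ∘ j) ∧ ∀ i, ε (j i) = τ i := by
  constructor
  · intro h
    obtain ⟨y, hy, hyx⟩ := Measure.exists_mem_forall_mem_of_pi_pos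
      (fun i => diracPart_compl_image_eq_zero ε x (τ i)) h
    choose j hj hxj using hyx
    exact ⟨j, by rwa [show x ∘ j = y from funext hxj], hj⟩
  · rintro ⟨j, hj, hτ⟩
    refine Measure.pi_pos_of_mem_of_singleton_ne_zero (y := x ∘ j) hj fun i => ?_
    rw [← hτ i]
    exact diracPart_singleton_ne_zero ε x

theorem diracPart_mutuallySingular {s t : ℤ} (h : ∀ i j, ε i = s → ε j = t → x i ≠ x j) :
    diracPart ε x s ⟂ₘ diracPart ε x t :=
  ⟨x '' {i | ε i = t}, measurableSet_image_setOf_eq ε x t,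
    (diracPart_apply_eq_zero_iff ε x (measurableSet_image_setOf_eq ε x t)).2
      fun i hi ⟨j, hj, hji⟩ => h i j hi hj hji.symm,
    diracPart_compl_image_eq_zero ε x t⟩

theorem sum_smul_dirac_toSignedMeasure (hε : ∀ i, ε i = 1 ∨ ε i = -1) :
    ∑ i, (ε i : ℝ) • (Measure.dirac (x i)).toSignedMeasure =
      (diracPart ε x 1).toSignedMeasure - (diracPart ε x (-1)).toSignedMeasure := by
  ext U hU
  simp only [sub_apply, Measure.toSignedMeasure_apply_measurable hU, diracPart, measureReal_def,
    Measure.finsetSum_apply, FunLike.coe_sum, Finset.sum_apply, smul_apply, smul_eq_mul]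
  rw [ENNReal.toReal_sum fun _ _ => measure_ne_top _ _,
    ENNReal.toReal_sum fun _ _ => measure_ne_top _ _, Finset.sum_filter, Finset.sum_filter,
    ← Finset.sum_sub_distrib]
  refine Finset.sum_congr rfl fun i _ => ?_
  rcases hε i with h | h <;> simp [h]

theorem altMeasure_diracPart (a b : ℤ) (m : ℕ) :
    altMeasure (diracPart ε x a) (diracPart ε x b) m =
      Measure.pi fun i : Fin m => diracPart ε x (if Even (i : ℕ) then a else b) := by
  simp only [altMeasure, apply_ite (diracPart ε x)]

theorem sigmaCross_sum_smul_dirac (hε : ∀ i, ε i = 1 ∨ ε i = -1)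
    (hx : ∀ i j, ε i ≠ ε j → x i ≠ x j) :
    sigmaCross (∑ i, (ε i : ℝ) • (Measure.dirac (x i)).toSignedMeasure) =
      sigmaPair (diracPart ε x 1) (diracPart ε x (-1)) := by
  let J : JordanDecomposition ℝ := ⟨diracPart ε x 1, diracPart ε x (-1),
    diracPart_mutuallySingular ε x fun i j hi hj => hx i j (by rw [hi, hj]; decide)⟩
  rw [sigmaCross, sum_smul_dirac_toSignedMeasure ε x hε, show _ - _ = J.toSignedMeasure from rfl,
    JordanDecomposition.toJordanDecomposition_toSignedMeasure]

theorem sigmaPair_diracPart (hε : ∀ i, ε i = 1 ∨ ε i = -1) :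
    sigmaPair (diracPart ε x 1) (diracPart ε x (-1)) =
      ⨆ (m : ℕ) (_ : ∃ j : Fin (m + 1) → ι, IsAlternatingChain ε x j), (m : ℕ∞) := by
  refine iSup_congr fun m => iSup_congr_Prop ?_ fun _ => rfl
  simp only [altMeasure_diracPart, pi_diracPart_orderedSet_pos_iff]
  constructor
  · rintro (⟨j, hj, hτ⟩ | ⟨j, hj, hτ⟩)
    · exact ⟨j, hj, 1, fun i => by rw [hτ, one_mul, neg_one_pow_eq_ite]⟩
    · exact ⟨j, hj, -1, fun i => by rw [hτ, neg_one_mul, neg_one_pow_eq_ite]; split_ifs <;> simp⟩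
  · rintro ⟨j, hj, s, hs⟩
    have hs0 := hs 0
    rw [Fin.val_zero, pow_zero, mul_one] at hs0
    rcases hε (j 0) with h | h
    · exact Or.inl ⟨j, hj, fun i => by rw [hs, ← hs0, h, one_mul, neg_one_pow_eq_ite]⟩
    · refine Or.inr ⟨j, hj, fun i => ?_⟩
      rw [hs, ← hs0, h, neg_one_mul, neg_one_pow_eq_ite]
      split_ifs <;> simp

end DiracPart

/-- For `ν = ∑ εᵢ δ_{xᵢ}` with `εᵢ = ±1`, `x` nondecreasing and strictly increasing across
sign changes, the number of zero-crossings `Σ(ν)` equals the number of sign changes of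
`(ε₁, …, ε_n)`. -/
theorem stmt7 (n : ℕ) (hn : 0 < n) (ε : Fin n → ℤ) (x : Fin n → ℝ)
    (hε : ∀ i, ε i = 1 ∨ ε i = -1) (hx : Monotone x)
    (hsep : ∀ (i : ℕ) (h : i + 1 < n),
      ε ⟨i, Nat.lt_of_succ_lt h⟩ ≠ ε ⟨i + 1, h⟩ →
      x ⟨i, Nat.lt_of_succ_lt h⟩ < x ⟨i + 1, h⟩) :
    sigmaCross (∑ i : Fin n, (ε i : ℝ) • (MeasureTheory.Measure.dirac (x i)).toSignedMeasure)
      = ((Finset.univ.filter (fun i : Fin n =>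
          ∃ h : (i : ℕ) + 1 < n, ε i ≠ ε ⟨(i : ℕ) + 1, h⟩)).card : ℕ∞) := by
  obtain ⟨N, rfl⟩ : ∃ N, n = N + 1 := ⟨n - 1, by omega⟩
  have hsep' : ∀ i : Fin N, ε i.castSucc ≠ ε i.succ → x i.castSucc < x i.succ :=
    fun i => hsep i (by omega)
  rw [sigmaCross_sum_smul_dirac ε x hε fun i j => ne_of_sign_ne_of_sep hε hx hsep',
    sigmaPair_diracPart ε x hε, card_filter_ne_succ_eq_changeCount]
  simp_rw [exists_isAlternatingChain_iff hε hx hsep']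
  exact biSup_le_eq_of_monotone Nat.mono_cast _
end

section
/- Let the random signed measure ν = Σ_{i=1}^n V_i δ_{X_i}, where (V_i, X_i) are i.i.d. with P(V₁=+1, X₁∈B) = μ⁺(B), P(V₁=−1, X₁∈B) = μ⁻(B) for mutually singular probability-normalized μ⁺, μ⁻ (μ⁺(ℝ)+μ⁻(ℝ)=1). Then almost surely Σ(ν) ≤ Σ(μ), where Σ denotes the number of zero-crossings of a finite signed measure. -/
open MeasureTheory ENNReal

/-!
Almost surely every label is `±1`, so `ν = ν₊ - ν₋` where `ν₊`, `ν₋` are the sums of the Dirac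
masses carrying label `+1`, resp. `-1`. By minimality of the Jordan decomposition, `ν⁺` and `ν⁻`
live on the finite sets of atoms of `ν₊` and `ν₋`, so an alternating product measure of `ν` can
charge the ordered simplex `H_{k+1}` only if some `k+1` of the points, read in increasing order,
carry alternating labels. For a fixed injective choice of indices, independence shows that this
event has probability exactly the corresponding alternating product measure of `μ` of `H_{k+1}`;
when that vanishes, the countable union over all choices of indices is null.
-/

open MeasureTheory ProbabilityTheory Set

section Patterns

variable {ι β : Type*}

-- `altMeasure p q m` is `Measure.pi (altPattern p q m)` by definition.
def altPattern (s t : β) (m : ℕ) : Fin m → β := fun j => if Even (j : ℕ) then s else t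

instance {α : Type*} [MeasurableSpace α] (a b : Measure α) [SigmaFinite a] [SigmaFinite b]
    (m : ℕ) (j : Fin m) : SigmaFinite (altPattern a b m j) := by
  unfold altPattern; split_ifs <;> infer_instance

def HasOrderedPattern {m : ℕ} (v : ι → β) (x : ι → ℝ) (w : Fin m → β) : Prop :=
  ∃ σ : Fin m → ι, (∀ j, v (σ j) = w j) ∧ StrictMono (x ∘ σ)

lemma HasOrderedPattern.of_comp {κ : Type*} {m : ℕ} {v : ι → β} {x : ι → ℝ} {w : Fin m → β}
    (g : κ → ι) (h : HasOrderedPattern (v ∘ g) (x ∘ g) w) : HasOrderedPattern v x w := by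
  obtain ⟨σ, hv, hx⟩ := h
  exact ⟨g ∘ σ, hv, hx⟩

end Patterns

lemma measurableSet_orderedSet (m : ℕ) : MeasurableSet (orderedSet m) := by
  have : orderedSet m = ⋂ (i : Fin m) (j : Fin m) (_ : i < j), {x | x i < x j} := by
    ext x; simp [orderedSet, StrictMono]
  rw [this]
  exact .iInter fun i => .iInter fun j => .iInter fun _ =>
    measurableSet_lt (measurable_pi_apply i) (measurable_pi_apply j)

lemma pi_orderedSet_eq_zero_of_not_hasOrderedPattern {ι β : Type*} {m : ℕ} {v : ι → β}
    {x : ι → ℝ} {w : Fin m → β} (μ : Fin m → Measure ℝ) [∀ j, SigmaFinite (μ j)]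
    (hμ : ∀ j, μ j (x '' {i | v i = w j})ᶜ = 0) (h : ¬HasOrderedPattern v x w) :
    Measure.pi μ (orderedSet m) = 0 := by
  refine measure_mono_null (fun y hy => ?_)
    (measure_iUnion_null fun j => Measure.pi_eval_preimage_null μ (hμ j))
  by_contra hy'
  simp only [mem_iUnion, mem_preimage, Function.eval, mem_compl_iff, not_exists, not_not] at hy'
  choose σ hσv hσx using hy'
  exact h ⟨σ, hσv, (funext hσx : x ∘ σ = y) ▸ hy⟩

lemma toJordanDecomposition_sub_posPart_le {α : Type*} [MeasurableSpace α] (a b : Measure α)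
    [IsFiniteMeasure a] [IsFiniteMeasure b] {E : Set α} (hE : MeasurableSet E) :
    (a.toSignedMeasure - b.toSignedMeasure).toJordanDecomposition.posPart E ≤ a E := by
  obtain ⟨i, hi, hi₂, -, hpos, -⟩ :=
    (a.toSignedMeasure - b.toSignedMeasure).toJordanDecomposition_spec
  rw [hpos, SignedMeasure.toMeasureOfZeroLE_apply _ hi₂ hi hE]
  calc _ ≤ a (i ∩ E) := ?_
    _ ≤ a E := measure_mono inter_subset_right
  rw [← ENNReal.ofReal_coe_nnreal, ENNReal.ofReal_le_iff_le_toReal (measure_ne_top _ _),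
    NNReal.coe_mk, Measure.toSignedMeasure_sub_apply (hi.inter hE)]
  linarith [measureReal_nonneg (μ := b) (s := i ∩ E), measureReal_def a (i ∩ E)]

lemma toJordanDecomposition_sub_negPart_le {α : Type*} [MeasurableSpace α] (a b : Measure α)
    [IsFiniteMeasure a] [IsFiniteMeasure b] {E : Set α} (hE : MeasurableSet E) :
    (a.toSignedMeasure - b.toSignedMeasure).toJordanDecomposition.negPart E ≤ b E := by
  rw [← JordanDecomposition.neg_posPart, ← SignedMeasure.toJordanDecomposition_neg, neg_sub]
  exact toJordanDecomposition_sub_posPart_le b a hE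

lemma MeasureTheory.Measure.toSignedMeasure_finset_sum {α ι : Type*} [MeasurableSpace α]
    (s : Finset ι) (μ : ι → Measure α) [∀ i, IsFiniteMeasure (μ i)] :
    (∑ i ∈ s, μ i).toSignedMeasure = ∑ i ∈ s, (μ i).toSignedMeasure := by
  classical
  induction s using Finset.induction_on with
  | empty => simp
  | insert a s ha ih =>
    rw [Measure.toSignedMeasure_congr (Finset.sum_insert ha), Measure.toSignedMeasure_add, ih,
      Finset.sum_insert ha]

section LabelledDiracs

variable {ι α β : Type*} [Fintype ι] [MeasurableSpace α] [DecidableEq β]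

noncomputable def labelledDiracs (v : ι → β) (x : ι → α) (s : β) : Measure α :=
  ∑ i ∈ Finset.univ.filter (v · = s), Measure.dirac (x i)

instance (v : ι → β) (x : ι → α) (s : β) : IsFiniteMeasure (labelledDiracs v x s) := by
  unfold labelledDiracs; infer_instance

lemma labelledDiracs_toSignedMeasure (v : ι → β) (x : ι → α) (s : β) :
    (labelledDiracs v x s).toSignedMeasure =
      ∑ i, if v i = s then (Measure.dirac (x i)).toSignedMeasure else 0 :=
  (Measure.toSignedMeasure_finset_sum _ _).trans (Finset.sum_filter _ _)

lemma sum_smul_dirac_toSignedMeasure_s18 {v : ι → ℤ} (hv : ∀ i, v i = 1 ∨ v i = -1) (x : ι → α) :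
    ∑ i, (v i : ℝ) • (Measure.dirac (x i)).toSignedMeasure =
      (labelledDiracs v x 1).toSignedMeasure - (labelledDiracs v x (-1)).toSignedMeasure := by
  rw [labelledDiracs_toSignedMeasure, labelledDiracs_toSignedMeasure, ← Finset.sum_sub_distrib]
  refine Finset.sum_congr rfl fun i _ => ?_
  rcases hv i with h | h
  · simp [h]
  · ext E hE
    simp [h, hE]

lemma labelledDiracs_compl_image [MeasurableSingletonClass α] (v : ι → β) (x : ι → α) (s : β) :
    labelledDiracs v x s (x '' {i | v i = s})ᶜ = 0 := by
  simp only [labelledDiracs, Measure.finsetSum_apply]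
  refine Finset.sum_eq_zero fun i hi => ?_
  rw [Measure.dirac_apply, indicator_of_notMem]
  simp only [Finset.mem_filter] at hi
  exact not_not.2 ⟨i, hi.2, rfl⟩

end LabelledDiracs

lemma sigmaPair_le_sigmaPair {a b p q : Measure ℝ}
    (hab : ∀ m, altMeasure p q m (orderedSet m) = 0 → altMeasure a b m (orderedSet m) = 0)
    (hba : ∀ m, altMeasure q p m (orderedSet m) = 0 → altMeasure b a m (orderedSet m) = 0) :
    sigmaPair a b ≤ sigmaPair p q := by
  refine iSup₂_le fun k hk => le_iSup₂_of_le k ?_ le_rfl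
  simp only [pos_iff_ne_zero] at hk ⊢
  exact hk.imp (mt (hab _)) (mt (hba _))

lemma sigmaCross_toSignedMeasure_sub {p q : Measure ℝ} [IsFiniteMeasure p] [IsFiniteMeasure q]
    (hpq : p ⟂ₘ q) : sigmaCross (p.toSignedMeasure - q.toSignedMeasure) = sigmaPair p q := by
  have hJ : (p.toSignedMeasure - q.toSignedMeasure).toJordanDecomposition = ⟨p, q, hpq⟩ :=
    SignedMeasure.toJordanDecomposition_eq rfl
  rw [sigmaCross, hJ]

lemma sigmaCross_sum_smul_dirac_le {ι : Type*} [Fintype ι] {v : ι → ℤ}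
    (hv : ∀ i, v i = 1 ∨ v i = -1) (x : ι → ℝ) (p q : Measure ℝ)
    (hpq : ∀ m, altMeasure p q m (orderedSet m) = 0 →
      ¬HasOrderedPattern v x (altPattern 1 (-1) m))
    (hqp : ∀ m, altMeasure q p m (orderedSet m) = 0 →
      ¬HasOrderedPattern v x (altPattern (-1) 1 m)) :
    sigmaCross (∑ i, (v i : ℝ) • (Measure.dirac (x i)).toSignedMeasure) ≤ sigmaPair p q := by
  rw [sigmaCross, sum_smul_dirac_toSignedMeasure_s18 hv]
  set J := ((labelledDiracs v x 1).toSignedMeasure -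
    (labelledDiracs v x (-1)).toSignedMeasure).toJordanDecomposition
  have hsupp : ∀ s : ℤ, MeasurableSet (x '' {i | v i = s})ᶜ :=
    fun s => (Set.toFinite _).measurableSet.compl
  have hpos : J.posPart (x '' {i | v i = 1})ᶜ = 0 := nonpos_iff_eq_zero.1 <|
    (toJordanDecomposition_sub_posPart_le _ _ (hsupp 1)).trans_eq (labelledDiracs_compl_image ..)
  have hneg : J.negPart (x '' {i | v i = -1})ᶜ = 0 := nonpos_iff_eq_zero.1 <|
    (toJordanDecomposition_sub_negPart_le _ _ (hsupp (-1))).trans_eq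
      (labelledDiracs_compl_image ..)
  refine sigmaPair_le_sigmaPair (fun m h => ?_) (fun m h => ?_)
  · refine pi_orderedSet_eq_zero_of_not_hasOrderedPattern (altPattern J.posPart J.negPart m)
      (fun j => ?_) (hpq m h)
    unfold altPattern; split_ifs; exacts [hpos, hneg]
  · refine pi_orderedSet_eq_zero_of_not_hasOrderedPattern (altPattern J.negPart J.posPart m)
      (fun j => ?_) (hqp m h)
    unfold altPattern; split_ifs; exacts [hneg, hpos]

section IidPairs

variable {Ω ι β : Type*} {mΩ : MeasurableSpace Ω} [MeasurableSpace β]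
  [MeasurableSingletonClass β] {P : Measure Ω} {V : ι → Ω → β} {X : ι → Ω → ℝ}
  {m : ℕ} {w : Fin m → β} {μ : Fin m → Measure ℝ} [∀ j, SigmaFinite (μ j)]

lemma measure_pattern_eq_pi (hX : ∀ i, Measurable (X i))
    (hindep : iIndepFun (fun i ω => (V i ω, X i ω)) P)
    (hlaw : ∀ i j B, MeasurableSet B → P {ω | V i ω = w j ∧ X i ω ∈ B} = μ j B)
    {σ : Fin m → ι} (hσ : σ.Injective) {S : Set (Fin m → ℝ)} (hS : MeasurableSet S) :
    P {ω | (∀ j, V (σ j) ω = w j) ∧ (fun j => X (σ j) ω) ∈ S} = Measure.pi μ S := by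
  set E := {ω | ∀ j, V (σ j) ω = w j}
  have hY : Measurable fun ω j => X (σ j) ω := measurable_pi_lambda _ fun j => hX (σ j)
  have hlawE : (P.restrict E).map (fun ω j => X (σ j) ω) = Measure.pi μ := by
    refine (Measure.pi_eq fun B hB => ?_).symm
    rw [Measure.map_apply hY (.univ_pi hB), Measure.restrict_apply (hY (.univ_pi hB))]
    have hbox : (fun ω j => X (σ j) ω) ⁻¹' univ.pi B ∩ E =
        ⋂ j, (fun ω => (V (σ j) ω, X (σ j) ω)) ⁻¹' ({w j} ×ˢ B j) := by
      ext ω; simp [E, forall_and, and_comm]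
    rw [hbox, (hindep.precomp hσ).meas_iInter
      fun j => ⟨_, (measurableSet_singleton _).prod (hB j), rfl⟩]
    exact Finset.prod_congr rfl fun j _ => hlaw (σ j) j (B j) (hB j)
  rw [← hlawE, Measure.map_apply hY hS, Measure.restrict_apply (hY hS)]
  congr 1
  ext ω; simp [E, and_comm]

lemma ae_not_hasOrderedPattern [Countable ι] (hX : ∀ i, Measurable (X i))
    (hindep : iIndepFun (fun i ω => (V i ω, X i ω)) P)
    (hlaw : ∀ i j B, MeasurableSet B → P {ω | V i ω = w j ∧ X i ω ∈ B} = μ j B)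
    (h0 : Measure.pi μ (orderedSet m) = 0) :
    ∀ᵐ ω ∂P, ¬HasOrderedPattern (V · ω) (X · ω) w := by
  have hsub : {ω | ¬¬HasOrderedPattern (V · ω) (X · ω) w} ⊆
      ⋃ σ : {σ : Fin m → ι // σ.Injective},
        {ω | (∀ j, V (σ.1 j) ω = w j) ∧ (fun j => X (σ.1 j) ω) ∈ orderedSet m} := by
    rintro ω hω
    obtain ⟨σ, hσv, hσx⟩ := not_not.1 hω
    exact mem_iUnion.2 ⟨⟨σ, hσx.injective.of_comp⟩, hσv, hσx⟩
  refine ae_iff.2 (measure_mono_null hsub (measure_iUnion_null fun σ => ?_))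
  rw [measure_pattern_eq_pi hX hindep hlaw σ.2 (measurableSet_orderedSet m), h0]

lemma ae_not_hasOrderedPattern_altPattern [Countable ι] (hX : ∀ i, Measurable (X i))
    (hindep : iIndepFun (fun i ω => (V i ω, X i ω)) P) {s t : β} {a b : Measure ℝ}
    [SigmaFinite a] [SigmaFinite b]
    (hab : ∀ i B, MeasurableSet B →
      P {ω | V i ω = s ∧ X i ω ∈ B} = a B ∧ P {ω | V i ω = t ∧ X i ω ∈ B} = b B) (m : ℕ) :
    ∀ᵐ ω ∂P, altMeasure a b m (orderedSet m) = 0 →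
      ¬HasOrderedPattern (V · ω) (X · ω) (altPattern s t m) := by
  refine Filter.eventually_imp_distrib_left.2 fun h0 =>
    ae_not_hasOrderedPattern (μ := altPattern a b m) hX hindep (fun i j B hB => ?_) h0
  unfold altPattern; split_ifs; exacts [(hab i B hB).1, (hab i B hB).2]

end IidPairs

lemma ae_eq_or_eq_of_measure_add_measure_eq_one {Ω γ : Type*} {mΩ : MeasurableSpace Ω}
    {P : Measure Ω} [IsProbabilityMeasure P] [MeasurableSpace γ] [MeasurableSingletonClass γ]
    {f : Ω → γ} (hf : Measurable f) {s t : γ} (hst : s ≠ t)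
    (h : P {ω | f ω = s} + P {ω | f ω = t} = 1) : ∀ᵐ ω ∂P, f ω = s ∨ f ω = t := by
  have hs : MeasurableSet {ω | f ω = s} := hf (measurableSet_singleton s)
  have ht : MeasurableSet {ω | f ω = t} := hf (measurableSet_singleton t)
  rw [ae_iff_measure_eq (p := fun ω => f ω = s ∨ f ω = t) (hs.union ht).nullMeasurableSet,
    ofPred_or, measure_union (disjoint_left.2 fun ω h1 h2 => hst (h1.symm.trans h2)) ht, h, measure_univ]

open MeasureTheory in
/-- For `ν = ∑_{i<n} Vᵢ δ_{Xᵢ}` with `(Vᵢ, Xᵢ)` i.i.d. of law `δ₊₁ ⊗ μ⁺ + δ₋₁ ⊗ μ⁻`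
(`μ⁺ ⟂ μ⁻`, `μ⁺(ℝ) + μ⁻(ℝ) = 1`), almost surely `Σ(ν) ≤ Σ(μ)`. -/
theorem stmt18 {Ω : Type*} {mΩ : MeasurableSpace Ω} (P : Measure Ω) [IsProbabilityMeasure P]
    (V : ℕ → Ω → ℤ) (X : ℕ → Ω → ℝ) (p q : Measure ℝ)
    [IsFiniteMeasure p] [IsFiniteMeasure q]
    (hsing : p ⟂ₘ q) (hprob : p Set.univ + q Set.univ = 1)
    (hVmeas : ∀ i, Measurable (V i)) (hXmeas : ∀ i, Measurable (X i))
    (hindep : ProbabilityTheory.iIndepFun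
      (fun i ω => (V i ω, X i ω)) P)
    (hlaw : ∀ i, ∀ B : Set ℝ, MeasurableSet B →
      P {ω | V i ω = 1 ∧ X i ω ∈ B} = p B ∧ P {ω | V i ω = -1 ∧ X i ω ∈ B} = q B)
    (n : ℕ) :
    ∀ᵐ ω ∂P,
      sigmaCross (∑ i : Fin n, (V i ω : ℝ) • (Measure.dirac (X i ω)).toSignedMeasure) ≤
        sigmaCross (p.toSignedMeasure - q.toSignedMeasure) := by
  have hsign : ∀ i, ∀ᵐ ω ∂P, V i ω = 1 ∨ V i ω = -1 := fun i => by
    obtain ⟨h1, h2⟩ := hlaw i univ .univ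
    simp only [mem_univ, and_true] at h1 h2
    exact ae_eq_or_eq_of_measure_add_measure_eq_one (hVmeas i) (by decide) (by rw [h1, h2, hprob])
  filter_upwards [ae_all_iff.2 fun i : Fin n => hsign i,
    ae_all_iff.2 (ae_not_hasOrderedPattern_altPattern hXmeas hindep hlaw),
    ae_all_iff.2 (ae_not_hasOrderedPattern_altPattern hXmeas hindep
      fun i B hB => (hlaw i B hB).symm)] with ω hω hpq hqp
  rw [sigmaCross_toSignedMeasure_sub hsing]
  exact sigmaCross_sum_smul_dirac_le hω _ p q (fun m h hpat => hpq m h (hpat.of_comp Fin.val))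
    (fun m h hpat => hqp m h (hpat.of_comp Fin.val))
end

section
/- There exists a Feller (space-time) Markov semigroup whose associated process is not a diffusion and whose transition kernels strictly increase the number of zero-crossings of some finite signed measure: namely, for the space-time process on ℝ₊ × ℝ where the spatial component is a continuous-time simple random walk that waits an Exp(1) time and then jumps ±1 with probability 1/2 each, and for the measure μ = δ₀ − δ_{1/2}, one has Σ(μ) = 1 while Σ(μQ_t) = ∞ for every t > 0, where Q_t is the time-t transition kernel. -/
open MeasureTheory ENNReal

open MeasureTheory in
/-- Law at time `m` of the discrete simple random walk on ℝ started at `0`. -/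
noncomputable def walkDist : ℕ → Measure ℝ
  | 0 => Measure.dirac 0
  | (m + 1) => (walkDist m).bind
      (fun y => (1/2 : ENNReal) • Measure.dirac (y + 1) + (1/2 : ENNReal) • Measure.dirac (y - 1))

open MeasureTheory in
/-- Time-`t` transition kernel of the continuous-time simple random walk: wait `Exp(1)` times
between `±1` jumps, i.e. `Q_t(x,·) = ∑ₘ e^{-t} tᵐ/m! · (law of x + Sₘ)`. -/
noncomputable def Qrw (t : ℝ) (x : ℝ) : Measure ℝ :=
  Measure.sum (fun m : ℕ =>
    ENNReal.ofReal (Real.exp (-t) * t ^ m / m.factorial) • (walkDist m).map (fun y => x + y))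

/-!
Started at `x`, the walk only charges the lattice `x + ℤ`, and it charges every point `x + k`,
`k ∈ ℕ`, since it may take `k` steps to the right. Hence `Q_t(0, ·)` and `Q_t(1/2, ·)` are
mutually singular, and their atoms interleave as `0 < 1/2 < 1 < 3/2 < ⋯`, giving alternating
chains of every length. Two Dirac masses, in contrast, only carry alternating chains of length two.
-/

open Set

noncomputable def walkStep (y : ℝ) : Measure ℝ :=
  (1/2 : ℝ≥0∞) • Measure.dirac (y + 1) + (1/2 : ℝ≥0∞) • Measure.dirac (y - 1)

lemma walkDist_succ (m : ℕ) : walkDist (m + 1) = (walkDist m).bind walkStep := rfl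

lemma measurable_walkStep : Measurable walkStep := by
  refine Measure.measurable_of_measurable_coe _ fun s hs => ?_
  simp only [walkStep, Measure.add_apply, Measure.smul_apply, smul_eq_mul,
    Measure.dirac_apply' _ hs]
  fun_prop (disch := exact hs)

instance (y : ℝ) : IsProbabilityMeasure (walkStep y) :=
  ⟨by simp [walkStep, ENNReal.inv_two_add_inv_two]⟩

instance (m : ℕ) : IsProbabilityMeasure (walkDist m) := by
  induction m with
  | zero => rw [walkDist]; infer_instance
  | succ m ih =>
    exact isProbabilityMeasure_bind measurable_walkStep.aemeasurable
      (.of_forall fun y => inferInstanceAs (IsProbabilityMeasure (walkStep y)))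

lemma walkDist_singleton_natCast_pos (m : ℕ) : 0 < walkDist m {(m : ℝ)} := by
  induction m with
  | zero => simp [walkDist]
  | succ m ih =>
    rw [walkDist_succ, Measure.bind_apply (measurableSet_singleton _)
      measurable_walkStep.aemeasurable]
    have hstep : 0 < walkStep m {((m + 1 : ℕ) : ℝ)} := by simp [walkStep]
    refine (ENNReal.mul_pos hstep.ne' ih.ne').trans_le ?_
    rw [← lintegral_singleton (fun y => walkStep y {((m + 1 : ℕ) : ℝ)})]
    exact setLIntegral_le_lintegral _ _

lemma walkDist_compl_range_intCast (m : ℕ) : walkDist m (range ((↑) : ℤ → ℝ))ᶜ = 0 := by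
  have hS : MeasurableSet (range ((↑) : ℤ → ℝ))ᶜ :=
    (countable_range _).measurableSet.compl
  induction m with
  | zero => rw [walkDist, Measure.dirac_apply' _ hS, indicator_of_notMem (by simp)]
  | succ m ih =>
    rw [walkDist_succ, Measure.bind_apply hS measurable_walkStep.aemeasurable]
    refine (lintegral_congr_ae ?_).trans lintegral_zero
    filter_upwards [measure_eq_zero_iff_ae_notMem.1 ih] with y hy
    obtain ⟨k, rfl⟩ := not_not.1 hy
    have h₁ : (k : ℝ) + 1 = ((k + 1 : ℤ) : ℝ) := by push_cast; ring
    have h₂ : (k : ℝ) - 1 = ((k - 1 : ℤ) : ℝ) := by push_cast; ring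
    have hmem (j : ℤ) : (j : ℝ) ∉ (range ((↑) : ℤ → ℝ))ᶜ := fun h => h ⟨j, rfl⟩
    simp only [walkStep, Measure.add_apply, Measure.smul_apply, Measure.dirac_apply' _ hS,
      h₁, h₂, indicator_of_notMem (hmem _), smul_zero, add_zero]

lemma Qrw_apply (t x : ℝ) {s : Set ℝ} (hs : MeasurableSet s) :
    Qrw t x s = ∑' m : ℕ, ENNReal.ofReal (Real.exp (-t) * t ^ m / m.factorial) *
      walkDist m ((x + ·) ⁻¹' s) := by
  rw [Qrw, Measure.sum_apply _ hs]
  congr 1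
  ext m
  rw [Measure.smul_apply, smul_eq_mul, Measure.map_apply (measurable_const_add x) hs]

lemma isProbabilityMeasure_Qrw {t : ℝ} (ht : 0 ≤ t) (x : ℝ) :
    IsProbabilityMeasure (Qrw t x) := by
  have h : HasSum (fun m : ℕ => Real.exp (-t) * t ^ m / m.factorial) 1 :=
    ProbabilityTheory.hasSum_one_poissonMeasure ⟨t, ht⟩
  refine ⟨?_⟩
  rw [Qrw_apply t x .univ]
  simp only [preimage_univ, measure_univ, mul_one]
  rw [← ENNReal.ofReal_tsum_of_nonneg (fun m => by positivity) h.summable, h.tsum_eq,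
    ENNReal.ofReal_one]

lemma Qrw_singleton_add_natCast_pos {t : ℝ} (ht : 0 < t) (x : ℝ) (k : ℕ) :
    0 < Qrw t x {x + k} := by
  rw [Qrw_apply t x (measurableSet_singleton _), preimage_add_left_singleton,
    neg_add_cancel_left]
  refine (ENNReal.mul_pos ?_ (walkDist_singleton_natCast_pos k).ne').trans_le (ENNReal.le_tsum k)
  exact (ENNReal.ofReal_pos.2 (by positivity)).ne'

lemma Qrw_compl_range_add_intCast (t x : ℝ) : Qrw t x (range fun k : ℤ => x + k)ᶜ = 0 := by
  rw [Qrw_apply t x (countable_range _).measurableSet.compl]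
  have hpre :
      (x + ·) ⁻¹' (range fun k : ℤ => x + k)ᶜ = (range ((↑) : ℤ → ℝ))ᶜ := by
    ext y
    simp
  simp [hpre, walkDist_compl_range_intCast]

lemma Qrw_mutuallySingular (t : ℝ) {x y : ℝ} (hxy : ∀ k : ℤ, x + k ≠ y) :
    Qrw t x ⟂ₘ Qrw t y := by
  refine ⟨_, (countable_range _).measurableSet.compl, Qrw_compl_range_add_intCast t x, ?_⟩
  refine measure_mono_null ?_ (Qrw_compl_range_add_intCast t y)
  rw [compl_compl]
  rintro _ ⟨k, rfl⟩ ⟨j, hj⟩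
  exact hxy (k - j) (by push_cast; linarith)

section Alternating

variable {p q : Measure ℝ}

lemma altMeasure_orderedSet_pos [SigmaFinite p] [SigmaFinite q] {n : ℕ} {c : Fin n → ℝ}
    (hc : StrictMono c) (hmass : ∀ i : Fin n, 0 < (if Even (i : ℕ) then p else q) {c i}) :
    0 < altMeasure p q n (orderedSet n) := by
  have : ∀ i : Fin n, SigmaFinite (if Even (i : ℕ) then p else q) := fun i => by
    split <;> infer_instance
  calc 0 < altMeasure p q n (univ.pi fun i => {c i}) := by
        rw [altMeasure, Measure.pi_pi]
        exact CanonicallyOrderedAdd.prod_pos.2 fun i _ => hmass i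
    _ ≤ altMeasure p q n (orderedSet n) := by
        rw [univ_pi_singleton]
        exact measure_mono (singleton_subset_iff.2 hc)

lemma altMeasure_dirac_orderedSet_eq_zero (v : ℝ) (q : Measure ℝ) [SigmaFinite q] {n : ℕ}
    (hn : 3 ≤ n) : altMeasure (Measure.dirac v) q n (orderedSet n) = 0 := by
  have : ∀ i : Fin n, SigmaFinite (if Even (i : ℕ) then Measure.dirac v else q) := fun i => by
    split <;> infer_instance
  have hnull (i : Fin n) (hi : Even (i : ℕ)) :
      altMeasure (Measure.dirac v) q n (Function.eval i ⁻¹' {v}ᶜ) = 0 :=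
    Measure.pi_eval_preimage_null _ (by simp [hi])
  let i₂ : Fin n := ⟨2, by omega⟩
  refine measure_mono_null (fun x hx => ?_)
    (measure_union_null (hnull ⟨0, by omega⟩ (by simp)) (hnull i₂ (by simp [i₂])))
  have h02 : x ⟨0, by omega⟩ < x i₂ := hx (show (0 : ℕ) < 2 by norm_num)
  by_contra h
  simp only [mem_union, mem_preimage, Function.eval, mem_compl_iff, mem_singleton_iff,
    not_or, not_not] at h
  exact h02.ne (h.1.trans h.2.symm)

lemma sigmaPair_comm : sigmaPair p q = sigmaPair q p := by
  simp only [sigmaPair, or_comm]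

lemma le_sigmaPair {n : ℕ} (h : 0 < altMeasure p q (n + 1) (orderedSet (n + 1)) ∨
    0 < altMeasure q p (n + 1) (orderedSet (n + 1))) : (n : ℕ∞) ≤ sigmaPair p q :=
  le_iSup₂ (f := fun (n : ℕ) (_ : 0 < altMeasure p q (n + 1) (orderedSet (n + 1)) ∨
    0 < altMeasure q p (n + 1) (orderedSet (n + 1))) => (n : ℕ∞)) n h

lemma sigmaPair_le {N : ℕ}
    (h : ∀ n, N < n → altMeasure p q (n + 1) (orderedSet (n + 1)) = 0 ∧
      altMeasure q p (n + 1) (orderedSet (n + 1)) = 0) : sigmaPair p q ≤ N := by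
  refine iSup₂_le fun n hn => ?_
  by_contra! hN
  obtain ⟨hpq, hqp⟩ := h n (by exact_mod_cast hN)
  simp [hpq, hqp] at hn

lemma sigmaPair_dirac_dirac {v w : ℝ} (hvw : v ≠ w) :
    sigmaPair (Measure.dirac v) (Measure.dirac w) = 1 := by
  wlog hlt : v < w generalizing v w
  · rw [sigmaPair_comm]; exact this hvw.symm (hvw.lt_or_gt.resolve_left hlt)
  refine le_antisymm (sigmaPair_le fun n hn => ⟨?_, ?_⟩) (le_sigmaPair (n := 1) (.inl ?_))
  · exact altMeasure_dirac_orderedSet_eq_zero _ _ (by omega)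
  · exact altMeasure_dirac_orderedSet_eq_zero _ _ (by omega)
  refine altMeasure_orderedSet_pos (c := ![v, w]) (fun i j hij => ?_) fun i => ?_
  · fin_cases i <;> fin_cases j <;> simp_all
  · fin_cases i <;> simp

lemma sigmaPair_eq_top_of_interleaved [SigmaFinite p] [SigmaFinite q] {x y : ℝ}
    (hxy : x < y) (hyx : y < x + 1) (hp : ∀ k : ℕ, 0 < p {x + k})
    (hq : ∀ k : ℕ, 0 < q {y + k}) :
    sigmaPair p q = ⊤ := by
  let c : ℕ → ℝ := fun i => (if Even i then x else y) + (i / 2 : ℕ)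
  have hc : StrictMono c := strictMono_nat_of_lt_succ fun i => by
    rcases Nat.even_or_odd' i with ⟨k, rfl | rfl⟩
    · have h : (2 * k + 1) / 2 = k := by omega
      simpa [c, h] using hxy
    · have h₁ : (2 * k + 1) / 2 = k := by omega
      have h₂ : (2 * k + 1 + 1) / 2 = k + 1 := by omega
      have : Even (2 * k + 1 + 1) := ⟨k + 1, by ring⟩
      simp [c, h₁, h₂, this]
      linarith
  refine eq_top_iff.2 <| ENat.iSup_natCast ▸ iSup_le fun n => le_sigmaPair (.inl ?_)
  refine altMeasure_orderedSet_pos (hc.comp Fin.val_strictMono) fun i => ?_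
  simp only [Function.comp, c]
  split_ifs
  · exact hp _
  · exact hq _

end Alternating

lemma sigmaCross_sub_of_mutuallySingular {p q : Measure ℝ} [IsFiniteMeasure p]
    [IsFiniteMeasure q] (h : p ⟂ₘ q) :
    sigmaCross (p.toSignedMeasure - q.toSignedMeasure) = sigmaPair p q := by
  have hj : p.toSignedMeasure - q.toSignedMeasure =
      (⟨p, q, h⟩ : JordanDecomposition ℝ).toSignedMeasure := rfl
  rw [sigmaCross, hj, JordanDecomposition.toJordanDecomposition_toSignedMeasure]

/-- Counterexample: the continuous-time simple random walk semigroup (not a diffusion) does not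
reduce zero-crossings.  Its kernels `Q_t` are Markov, and for `μ = δ₀ - δ_{1/2}` one has
`Σ(μ) = 1` while `μQ_t` has Jordan decomposition `(Q_t(0,·), Q_t(1/2,·))` (mutually singular)
with `Σ(μQ_t) = ∞` for every `t > 0`. -/
theorem stmt19 :
    (∀ t : ℝ, 0 ≤ t → ∀ x : ℝ, Qrw t x Set.univ = 1) ∧
    sigmaCross ((Measure.dirac (0 : ℝ)).toSignedMeasure -
      (Measure.dirac (1/2 : ℝ)).toSignedMeasure) = 1 ∧
    (∀ t : ℝ, 0 < t →
      (Qrw t 0) ⟂ₘ (Qrw t (1/2)) ∧ sigmaPair (Qrw t 0) (Qrw t (1/2)) = ⊤) := by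
  refine ⟨fun t ht x => (isProbabilityMeasure_Qrw ht x).measure_univ, ?_,
    fun t ht => ⟨?_, ?_⟩⟩
  · have hsing : Measure.dirac (0 : ℝ) ⟂ₘ Measure.dirac (1/2 : ℝ) :=
      ⟨{0}ᶜ, (measurableSet_singleton 0).compl, by simp, by simp⟩
    rw [sigmaCross_sub_of_mutuallySingular hsing, sigmaPair_dirac_dirac (by norm_num)]
  · refine Qrw_mutuallySingular t fun k hk => ?_
    have : ((2 * k : ℤ) : ℝ) = (1 : ℤ) := by push_cast; linarith
    have := Int.cast_injective this
    omega
  · have := isProbabilityMeasure_Qrw ht.le 0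
    have := isProbabilityMeasure_Qrw ht.le (1/2)
    exact sigmaPair_eq_top_of_interleaved (by norm_num) (by norm_num)
      (Qrw_singleton_add_natCast_pos ht 0) (Qrw_singleton_add_natCast_pos ht (1/2))
end
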